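/- Let m₁ = x²y, m₂ = x²z, m₃ = xy², m₄ = y²z, m₅ = xz², m₆ = yz² in ℂ[x,y,z] (the six monomials defining the Togliatti surface), and for (a,b,c) ∈ ℂ³ let H(a,b,c) be the 6×6 matrix whose (i,j)-entry is the second-order partial derivative of mᵢ with respect to the j-th of the six pairs (x,x), (y,y), (z,z), (x,y), (x,z), (y,z), evaluated at (a,b,c). Then det H(a,b,c) = 0 for all (a,b,c) ∈ ℂ³; i.e. the Togliatti surface satisfies at least one Laplace equation of order 2. -/

import Mathlib

/-!
The operator `x²∂ₓₓ + y²∂ᵧᵧ + z²∂𝓏𝓏 - xy∂ₓᵧ - xz∂ₓ𝓏 - yz∂ᵧ𝓏` multiplies `x^α y^β z^γ` by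
`α(α-1) + β(β-1) + γ(γ-1) - αβ - αγ - βγ`, which for a cubic monomial vanishes exactly when
`(α, β, γ)` is a permutation of `(2, 1, 0)`, i.e. on the six Togliatti monomials. So at every point
`v ≠ 0` the vector `(v₀², v₁², v₂², -v₀v₁, -v₀v₂, -v₁v₂)` of its coefficients is a nonzero kernel
vector of the Hessian-type matrix, while at `v = 0` that matrix vanishes.
-/

open MvPolynomial

/-- The six Togliatti monomials x²y, x²z, xy², y²z, xz², yz². -/
noncomputable def togliattiMonomials : Fin 6 → MvPolynomial (Fin 3) ℂ :=
  ![X 0 ^ 2 * X 1, X 0 ^ 2 * X 2, X 0 * X 1 ^ 2,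
    X 1 ^ 2 * X 2, X 0 * X 2 ^ 2, X 1 * X 2 ^ 2]

/-- The six unordered pairs of variables (x,x),(y,y),(z,z),(x,y),(x,z),(y,z). -/
def varPairs : Fin 6 → Fin 3 × Fin 3 :=
  ![(0, 0), (1, 1), (2, 2), (0, 1), (0, 2), (1, 2)]

/-- The 6×6 matrix of all second-order partial derivatives of the six Togliatti
monomials, evaluated at a point of ℂ³. -/
noncomputable def togliattiHessian (v : Fin 3 → ℂ) : Matrix (Fin 6) (Fin 6) ℂ :=
  Matrix.of fun i j =>
    eval v (pderiv (varPairs j).1 (pderiv (varPairs j).2 (togliattiMonomials i)))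

open Matrix

noncomputable def secondOrderOperator (coeffs : Fin 6 → MvPolynomial (Fin 3) ℂ)
    (f : MvPolynomial (Fin 3) ℂ) : MvPolynomial (Fin 3) ℂ :=
  ∑ j, coeffs j * pderiv (varPairs j).1 (pderiv (varPairs j).2 f)

theorem togliattiHessian_mulVec (coeffs : Fin 6 → MvPolynomial (Fin 3) ℂ) (v : Fin 3 → ℂ) :
    togliattiHessian v *ᵥ (fun j => eval v (coeffs j)) =
      fun i => eval v (secondOrderOperator coeffs (togliattiMonomials i)) := by
  ext i
  simp [mulVec, dotProduct, secondOrderOperator, togliattiHessian, map_sum, mul_comm]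

noncomputable def togliattiLaplaceCoeffs : Fin 6 → MvPolynomial (Fin 3) ℂ :=
  ![X 0 ^ 2, X 1 ^ 2, X 2 ^ 2, -(X 0 * X 1), -(X 0 * X 2), -(X 1 * X 2)]

theorem secondOrderOperator_togliattiLaplaceCoeffs_togliattiMonomials (i : Fin 6) :
    secondOrderOperator togliattiLaplaceCoeffs (togliattiMonomials i) = 0 := by
  fin_cases i <;>
    simp [secondOrderOperator, togliattiLaplaceCoeffs, togliattiMonomials, varPairs,
      Fin.sum_univ_succ, sq, pderiv_X, Pi.single_apply] <;> ring

theorem eval_togliattiLaplaceCoeffs_ne_zero {v : Fin 3 → ℂ} (hv : v ≠ 0) :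
    (fun j => eval v (togliattiLaplaceCoeffs j)) ≠ 0 := by
  contrapose! hv
  have hsq (k : Fin 3) : v k ^ 2 = 0 := by
    have := congrFun hv (Fin.castLE (by norm_num) k)
    fin_cases k <;> simpa [togliattiLaplaceCoeffs] using this
  funext k
  exact (pow_eq_zero_iff two_ne_zero).mp (hsq k)

theorem togliattiHessian_zero : togliattiHessian 0 = 0 := by
  ext i j
  fin_cases i <;> fin_cases j <;>
    simp [togliattiHessian, togliattiMonomials, varPairs, pderiv_X]

/-- The determinant of the matrix of second-order partials of the six Togliatti
monomials vanishes identically: the Togliatti surface satisfies at least one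
Laplace equation of order 2. -/
theorem togliatti_hessian_det_zero (a b c : ℂ) :
    (togliattiHessian ![a, b, c]).det = 0 := by
  by_cases hv : ![a, b, c] = 0
  · rw [hv, togliattiHessian_zero, det_zero]
  · refine exists_mulVec_eq_zero_iff.mp ⟨_, eval_togliattiLaplaceCoeffs_ne_zero hv, ?_⟩
    rw [togliattiHessian_mulVec]
    ext i
    simp [secondOrderOperator_togliattiLaplaceCoeffs_togliattiMonomials]
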